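/- arXiv:2407.01101 — 10 statements merged into one kernel-verified Lean document; each statement's English description precedes it below -/
import Mathlib

section
/- If α ∈ A ∩ [ia+b+1, (i+1)a−1] for some 0 ≤ i < k, then the element v_α := α + (k−i)a + b lies in the interval [ka+2b, (k+1)a+b−1] and does not belong to A. -/
theorem stmt0
    (a b k : ℤ) (ha : 0 < a) (hb : 0 < b) (hba : b < a) (hab : a < 2*b) (hk : 1 ≤ k)
    (A : Set ℤ) (h0A : (0:ℤ) ∈ A)
    (havoid : ∀ x ∈ A, ∀ y ∈ A,
      ¬ ((∃ j : ℤ, 1 ≤ j ∧ j ≤ k ∧ x - y = j * a) ∨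
         (∃ j : ℤ, 0 ≤ j ∧ j ≤ k ∧ x - y = j * a + b)))
    (i α : ℤ) (hi0 : 0 ≤ i) (hik : i < k)
    (hαA : α ∈ A) (hα1 : i*a + b + 1 ≤ α) (hα2 : α ≤ (i+1)*a - 1) :
    (k*a + 2*b ≤ α + (k - i)*a + b ∧ α + (k - i)*a + b ≤ (k+1)*a + b - 1) ∧
      α + (k - i)*a + b ∉ A := by
  refine ⟨⟨by nlinarith, by nlinarith⟩, ?_⟩
  intro hv
  exact havoid _ hv α hαA (Or.inr ⟨k - i, by omega, by omega, by ring⟩)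
end

section
/- Let α = ia + b + r ∈ A with 0 ≤ i < k and 0 ≤ r < b, and define the sequence x_n = r + n(a−b) for n ≥ 0. Let N be the minimal n such that either A ∩ S_{x_n} = ∅ or x_n ≥ 2b − a. Then for all 0 ≤ n ≤ N, if A ∩ S_{x_n} ≠ ∅ then there exists k' with i < k' ≤ k such that x_n + k'a ∈ A. -/
/-- `Sx a b k x = {x, x+a, ..., x+k*a, x+k*a+b}` -/
def Sx (a b k x : ℤ) : Set ℤ :=
  {y | ∃ j : ℤ, 0 ≤ j ∧ j ≤ k ∧ y = x + j * a} ∪ {x + k * a + b}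

theorem stmt3
    (a b k : ℤ) (ha : 0 < a) (hb : 0 < b) (hba : b < a) (hab : a < 2*b) (hk : 1 ≤ k)
    (A : Set ℤ) (h0A : (0:ℤ) ∈ A)
    (havoid : ∀ x ∈ A, ∀ y ∈ A,
      ¬ ((∃ j : ℤ, 1 ≤ j ∧ j ≤ k ∧ x - y = j * a) ∨
         (∃ j : ℤ, 0 ≤ j ∧ j ≤ k ∧ x - y = j * a + b)))
    (i α r : ℤ) (hi0 : 0 ≤ i) (hik : i < k)
    (hr0 : 0 ≤ r) (hrb : r < b) (hdecomp : α = i*a + b + r)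
    (hαA : α ∈ A) (hα1 : i*a + b + 1 ≤ α) (hα2 : α ≤ (i+1)*a - 1)
    (x : ℕ → ℤ) (hx : ∀ n : ℕ, x n = r + n * (a - b))
    (N : ℕ)
    (hN : A ∩ Sx a b k (x N) = ∅ ∨ 2*b - a ≤ x N)
    (hNmin : ∀ n : ℕ, n < N → ¬ (A ∩ Sx a b k (x n) = ∅ ∨ 2*b - a ≤ x n)) :
    ∀ n : ℕ, n ≤ N → (A ∩ Sx a b k (x n)).Nonempty →
      ∃ k' : ℤ, i < k' ∧ k' ≤ k ∧ x n + k' * a ∈ A := by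
  intro n
  induction n with
  | zero =>
    rintro _ ⟨z, hzA, hzS⟩
    have hx0 : x 0 = r := by rw [hx]; push_cast; ring
    simp only [Sx, Set.mem_union, Set.mem_setOf_eq, Set.mem_singleton_iff] at hzS
    rcases hzS with ⟨j, hj0, hjk, hzeq⟩ | hzeq
    · by_cases hji : j ≤ i
      · exact absurd (Or.inr ⟨i - j, by omega, by omega,
          by rw [hdecomp, hzeq, hx0]; ring⟩) (havoid α hαA z hzA)
      · exact ⟨j, by omega, hjk, by rwa [← hzeq]⟩
    · exact absurd (Or.inl ⟨k - i, by omega, by omega,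
        by rw [hdecomp, hzeq, hx0]; ring⟩) (havoid z hzA α hαA)
  | succ n ih =>
    rintro hn1 ⟨z, hzA, hzS⟩
    have hne : (A ∩ Sx a b k (x n)).Nonempty := by
      have h := hNmin n (by omega)
      push_neg at h
      exact h.1
    obtain ⟨k'', hik'', hk''k, hk''A⟩ := ih (by omega) hne
    have hxs : x (n+1) = x n + a - b := by rw [hx, hx]; push_cast; ring
    simp only [Sx, Set.mem_union, Set.mem_setOf_eq, Set.mem_singleton_iff] at hzS
    rcases hzS with ⟨j, hj0, hjk, hzeq⟩ | hzeq
    · by_cases hjk'' : j + 1 ≤ k''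
      · exact absurd (Or.inr ⟨k'' - j - 1, by omega, by omega,
          by rw [hzeq, hxs]; ring⟩) (havoid (x n + k''*a) hk''A z hzA)
      · exact ⟨j, by omega, hjk, by rwa [← hzeq]⟩
    · exact absurd (Or.inl ⟨k + 1 - k'', by omega, by omega,
        by rw [hzeq, hxs]; ring⟩) (havoid z hzA (x n + k''*a) hk''A)
end

section
/- Let α = ia + b + r ∈ A with 0 ≤ i < k and 0 ≤ r < b, let x_n = r + n(a−b), and let N be minimal with A ∩ S_{x_N} = ∅ or x_N ≥ 2b−a. If A ∩ S_{x_N} ≠ ∅ (so x_N ≥ 2b−a), then w_α := x_N + (k+1)a lies in [ka+2b, (k+1)a+b−1] and w_α ∉ A. -/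
theorem stmt4
    (a b k : ℤ) (ha : 0 < a) (hb : 0 < b) (hba : b < a) (hab : a < 2*b) (hk : 1 ≤ k)
    (A : Set ℤ) (h0A : (0:ℤ) ∈ A)
    (havoid : ∀ x ∈ A, ∀ y ∈ A,
      ¬ ((∃ j : ℤ, 1 ≤ j ∧ j ≤ k ∧ x - y = j * a) ∨
         (∃ j : ℤ, 0 ≤ j ∧ j ≤ k ∧ x - y = j * a + b)))
    (i α r : ℤ) (hi0 : 0 ≤ i) (hik : i < k)
    (hr0 : 0 ≤ r) (hrb : r < b) (hdecomp : α = i*a + b + r)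
    (hαA : α ∈ A) (hα1 : i*a + b + 1 ≤ α) (hα2 : α ≤ (i+1)*a - 1)
    (x : ℕ → ℤ) (hx : ∀ n : ℕ, x n = r + n * (a - b))
    (N : ℕ)
    (hN : A ∩ Sx a b k (x N) = ∅ ∨ 2*b - a ≤ x N)
    (hNmin : ∀ n : ℕ, n < N → ¬ (A ∩ Sx a b k (x n) = ∅ ∨ 2*b - a ≤ x n))
    (hNA : (A ∩ Sx a b k (x N)).Nonempty) :
    (k*a + 2*b ≤ x N + (k+1)*a ∧ x N + (k+1)*a ≤ (k+1)*a + b - 1) ∧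
      x N + (k+1)*a ∉ A := by
  -- first disjunct of hN is impossible
  have hx2 : 2*b - a ≤ x N := by
    rcases hN with h | h
    · exact absurd h (Set.nonempty_iff_ne_empty.mp hNA)
    · exact h
  -- key induction
  have D : ∀ n : ℕ, n ≤ N + 1 → x n ∉ A ∧ x n + k*a + b ∉ A := by
    intro n
    induction n with
    | zero =>
      intro _
      have hx0 : x 0 = r := by rw [hx 0]; push_cast; ring
      constructor
      · intro h
        apply havoid α hαA (x 0) h
        right
        exact ⟨i, hi0, hik.le, by rw [hx0, hdecomp]; ring⟩
      · intro h
        apply havoid (x 0 + k*a + b) h α hαA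
        left
        exact ⟨k - i, by linarith, by linarith, by rw [hx0, hdecomp]; ring⟩
    | succ m ih =>
      intro hm1
      have hm : m ≤ N := Nat.lt_succ_iff.mp hm1
      have ihm := ih (by omega)
      obtain ⟨β, hβA, hβS⟩ : (A ∩ Sx a b k (x m)).Nonempty := by
        rcases lt_or_eq_of_le hm with hlt | heq
        · have := hNmin m hlt
          push_neg at this
          exact this.1
        · rw [heq]; exact hNA
      have hstep : x (m+1) = x m + (a - b) := by
        rw [hx m, hx (m+1)]; push_cast; ring
      rcases hβS with ⟨j, hj0, hjk, hβ⟩ | hβ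
      · rcases eq_or_lt_of_le hj0 with hj | hj
        · exfalso
          apply ihm.1
          have : β = x m := by rw [hβ, ← hj]; ring
          rwa [this] at hβA
        · have hj1 : 1 ≤ j := hj
          constructor
          · intro h
            apply havoid β hβA (x (m+1)) h
            right
            exact ⟨j - 1, by linarith, by linarith, by rw [hβ, hstep]; ring⟩
          · intro h
            apply havoid (x (m+1) + k*a + b) h β hβA
            left
            exact ⟨k + 1 - j, by linarith, by linarith, by rw [hβ, hstep]; ring⟩
      · exact absurd (by rwa [hβ] at hβA) ihm.2
  -- upper bound on x N
  have hxNb : x N ≤ b - 1 := by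
    cases N with
    | zero =>
      rw [hx 0]; push_cast; linarith
    | succ m =>
      have := hNmin m (Nat.lt_succ_self m)
      push_neg at this
      have hlt : x m < 2*b - a := this.2
      have hstep : x (m+1) = x m + (a - b) := by
        rw [hx m, hx (m+1)]; push_cast; ring
      linarith
  refine ⟨⟨by linarith, by linarith⟩, ?_⟩
  have h2 := (D (N+1) le_rfl).2
  have heq : x N + (k+1)*a = x (N+1) + k*a + b := by
    rw [hx N, hx (N+1)]; push_cast; ring
  rwa [heq]
end

section
/- Let α = ia + b + r ∈ A with 0 ≤ i < k, 0 ≤ r < b, let x_n = r + n(a−b), and let N be minimal with A ∩ S_{x_N} = ∅ or x_N ≥ 2b−a. If A ∩ S_{x_N} ≠ ∅, then x_N + (k+1)a ≠ α + (k−i)a + b. -/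
theorem stmt5
    (a b k : ℤ) (ha : 0 < a) (hb : 0 < b) (hba : b < a) (hab : a < 2*b) (hk : 1 ≤ k)
    (A : Set ℤ) (h0A : (0:ℤ) ∈ A)
    (havoid : ∀ x ∈ A, ∀ y ∈ A,
      ¬ ((∃ j : ℤ, 1 ≤ j ∧ j ≤ k ∧ x - y = j * a) ∨
         (∃ j : ℤ, 0 ≤ j ∧ j ≤ k ∧ x - y = j * a + b)))
    (i α r : ℤ) (hi0 : 0 ≤ i) (hik : i < k)
    (hr0 : 0 ≤ r) (hrb : r < b) (hdecomp : α = i*a + b + r)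
    (hαA : α ∈ A) (hα1 : i*a + b + 1 ≤ α) (hα2 : α ≤ (i+1)*a - 1)
    (x : ℕ → ℤ) (hx : ∀ n : ℕ, x n = r + n * (a - b))
    (N : ℕ)
    (hN : A ∩ Sx a b k (x N) = ∅ ∨ 2*b - a ≤ x N)
    (hNmin : ∀ n : ℕ, n < N → ¬ (A ∩ Sx a b k (x n) = ∅ ∨ 2*b - a ≤ x n))
    (hNA : (A ∩ Sx a b k (x N)).Nonempty) :
    x N + (k+1)*a ≠ α + (k - i)*a + b := by
  intro heq
  -- From the equality, N*(a-b) = 2*b - a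
  have hxN := hx N
  have hNab : (N : ℤ) * (a - b) = 2*b - a := by
    rw [hxN, hdecomp] at heq; linarith
  -- N ≥ 1
  have hN1 : 1 ≤ N := by
    by_contra h
    push_neg at h
    interval_cases N
    simp at hNab
    linarith
  -- key induction: every S_{x n} meets A in a point x n + j*a with i+1 ≤ j ≤ k
  have key : ∀ n : ℕ, n ≤ N → ∃ j : ℤ, i + 1 ≤ j ∧ j ≤ k ∧ x n + j * a ∈ A := by
    intro n
    induction n with
    | zero =>
      intro _
      have hne := hNmin 0 (by omega)
      push_neg at hne
      obtain ⟨β, hβA, hβS⟩ := hne.1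
      rcases hβS with ⟨j, hj0, hjk, hβ⟩ | hβ
      · refine ⟨j, ?_, hjk, by rwa [← hβ]⟩
        by_contra hji
        push_neg at hji
        exact havoid α hαA β hβA (Or.inr ⟨i - j, by omega, by omega, by
          rw [hβ, hx 0, hdecomp]; push_cast; ring⟩)
      · simp only [Set.mem_singleton_iff] at hβ
        exact (havoid β hβA α hαA (Or.inl ⟨k - i, by omega, by omega, by
          rw [hβ, hx 0, hdecomp]; push_cast; ring⟩)).elim
    | succ n ih =>
      intro hle
      obtain ⟨j, hj1, hj2, hjA⟩ := ih (by omega)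
      have hne : (A ∩ Sx a b k (x (n+1))).Nonempty := by
        rcases eq_or_lt_of_le hle with h | h
        · rwa [h]
        · have := hNmin (n+1) h
          push_neg at this
          exact this.1
      obtain ⟨β, hβA, hβS⟩ := hne
      have hxs : x (n+1) = x n + (a - b) := by
        rw [hx n, hx (n+1)]; push_cast; ring
      rcases hβS with ⟨j', hj'0, hj'k, hβ⟩ | hβ
      · refine ⟨j', ?_, hj'k, by rwa [← hβ]⟩
        by_contra hji
        push_neg at hji
        exact havoid (x n + j * a) hjA β hβA (Or.inr ⟨j - j' - 1, by omega, by omega, by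
          rw [hβ, hxs]; ring⟩)
      · simp only [Set.mem_singleton_iff] at hβ
        exact (havoid β hβA (x n + j * a) hjA (Or.inl ⟨k - j + 1, by omega, by omega, by
          rw [hβ, hxs]; ring⟩)).elim
  obtain ⟨j, hj1, hj2, hjA⟩ := key N le_rfl
  exact havoid (x N + j * a) hjA α hαA (Or.inr ⟨j - i - 1, by omega, by omega, by
    rw [hxN, hdecomp]; linear_combination hNab⟩)
end

section
/- Let α = ia + b + r and β = i'a + b + s with 0 ≤ i' ≤ i < k, α ∈ A ∩ [ia+b+1, (i+1)a−1], β ∈ A ∩ [i'a+b+1, (i'+1)a−1], 0 ≤ r, s < b, and α ≠ β. Let x_n = r + n(a−b) and y_n = s + n(a−b), with minimal indices N, N' as in the construction. If N ≥ N' and x_N = y_{N'}, then β ≥ (i'+1)a, a contradiction; hence the terminal values of the sequences attached to distinct elements with x_N = y_{N'} cannot both arise, i.e., x_N ≠ y_{N'}. -/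
theorem stmt10
    (a b k : ℤ) (ha : 0 < a) (hb : 0 < b) (hba : b < a) (hab : a < 2*b) (hk : 1 ≤ k)
    (A : Set ℤ) (h0A : (0:ℤ) ∈ A)
    (havoid : ∀ x ∈ A, ∀ y ∈ A,
      ¬ ((∃ j : ℤ, 1 ≤ j ∧ j ≤ k ∧ x - y = j * a) ∨
         (∃ j : ℤ, 0 ≤ j ∧ j ≤ k ∧ x - y = j * a + b)))
    (i i' α β r s : ℤ) (hi'0 : 0 ≤ i') (hii : i' ≤ i) (hik : i < k)
    (hr0 : 0 ≤ r) (hrb : r < b) (hs0 : 0 ≤ s) (hsb : s < b)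
    (hαdecomp : α = i*a + b + r) (hβdecomp : β = i'*a + b + s)
    (hαA : α ∈ A) (hα1 : i*a + b + 1 ≤ α) (hα2 : α ≤ (i+1)*a - 1)
    (hβA : β ∈ A) (hβ1 : i'*a + b + 1 ≤ β) (hβ2 : β ≤ (i'+1)*a - 1)
    (hne : α ≠ β)
    (x y : ℕ → ℤ) (hx : ∀ n : ℕ, x n = r + n * (a - b)) (hy : ∀ n : ℕ, y n = s + n * (a - b))
    (N N' : ℕ)
    (hN : A ∩ Sx a b k (x N) = ∅ ∨ 2*b - a ≤ x N)
    (hNmin : ∀ n : ℕ, n < N → ¬ (A ∩ Sx a b k (x n) = ∅ ∨ 2*b - a ≤ x n))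
    (hN' : A ∩ Sx a b k (y N') = ∅ ∨ 2*b - a ≤ y N')
    (hN'min : ∀ n : ℕ, n < N' → ¬ (A ∩ Sx a b k (y n) = ∅ ∨ 2*b - a ≤ y n))
    (hNN' : N' ≤ N) :
    x N ≠ y N' := by
  intro heq
  rw [hx, hy] at heq
  rcases eq_or_lt_of_le hNN' with hEq | hlt
  · have hNeq : (N':ℤ) = N := by exact_mod_cast hEq
    have hrs : r = s := by
      rw [hNeq] at heq; linarith
    rcases eq_or_lt_of_le hii with h1 | h1
    · exact hne (by rw [hαdecomp, hβdecomp, h1, hrs])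
    · exact havoid α hαA β hβA (Or.inl ⟨i - i', by linarith, by linarith,
        by rw [hαdecomp, hβdecomp, hrs]; ring⟩)
  · have hd : (1:ℤ) ≤ (N:ℤ) - N' := by
      have : (N':ℤ) < N := by exact_mod_cast hlt
      linarith
    have hsge : a - b ≤ s := by nlinarith
    rw [hβdecomp] at hβ2
    linarith
end

section
/- Let α = ia + b + r ∈ A ∩ [ia+b+1, (i+1)a−1] and β = i'a + b + s ∈ A ∩ [i'a+b+1, (i'+1)a−1] with 0 ≤ i', i < k and 0 ≤ r, s < b. Suppose the terminal value y_{N'} of the sequence attached to β satisfies A ∩ S_{y_{N'}} ≠ ∅ and α + (k−i)a + b = y_{N'} + (k+1)a. Then i > i'. -/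
theorem stmt11
    (a b k : ℤ) (ha : 0 < a) (hb : 0 < b) (hba : b < a) (hab : a < 2*b) (hk : 1 ≤ k)
    (A : Set ℤ) (h0A : (0:ℤ) ∈ A)
    (havoid : ∀ x ∈ A, ∀ y ∈ A,
      ¬ ((∃ j : ℤ, 1 ≤ j ∧ j ≤ k ∧ x - y = j * a) ∨
         (∃ j : ℤ, 0 ≤ j ∧ j ≤ k ∧ x - y = j * a + b)))
    (i i' α β r s : ℤ) (hi0 : 0 ≤ i) (hik : i < k) (hi'0 : 0 ≤ i') (hi'k : i' < k)
    (hr0 : 0 ≤ r) (hrb : r < b) (hs0 : 0 ≤ s) (hsb : s < b)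
    (hαdecomp : α = i*a + b + r) (hβdecomp : β = i'*a + b + s)
    (hαA : α ∈ A) (hα1 : i*a + b + 1 ≤ α) (hα2 : α ≤ (i+1)*a - 1)
    (hβA : β ∈ A) (hβ1 : i'*a + b + 1 ≤ β) (hβ2 : β ≤ (i'+1)*a - 1)
    (y : ℕ → ℤ) (hy : ∀ n : ℕ, y n = s + n * (a - b))
    (N' : ℕ)
    (hN' : A ∩ Sx a b k (y N') = ∅ ∨ 2*b - a ≤ y N')
    (hN'min : ∀ n : ℕ, n < N' → ¬ (A ∩ Sx a b k (y n) = ∅ ∨ 2*b - a ≤ y n))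
    (hN'A : (A ∩ Sx a b k (y N')).Nonempty)
    (heq : α + (k - i)*a + b = y N' + (k+1)*a) :
    i' < i := by
  have key : ∀ n : ℕ, n ≤ N' → ∀ z ∈ A ∩ Sx a b k (y n),
      ∃ j : ℤ, i' < j ∧ j ≤ k ∧ z = y n + j * a := by
    intro n
    induction n with
    | zero =>
      intro _ z hz
      have hy0 : y 0 = s := by have := hy 0; simpa using this
      rcases hz.2 with ⟨j, hj0, hjk, hzj⟩ | hzb
      · rw [hy0] at hzj
        refine ⟨j, ?_, hjk, by rw [hy0]; exact hzj⟩
        by_contra h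
        push_neg at h
        exact havoid β hβA z hz.1 (Or.inr ⟨i' - j, by omega, by omega,
          by rw [hβdecomp, hzj]; ring⟩)
      · simp only [Set.mem_singleton_iff] at hzb
        rw [hy0] at hzb
        exact absurd (havoid z hz.1 β hβA (Or.inl ⟨k - i', by omega, by omega,
          by rw [hβdecomp, hzb]; ring⟩)) (fun h => h)
    | succ n ih =>
      intro hn1 z hz
      have hnlt : n < N' := by omega
      have hne : (A ∩ Sx a b k (y n)).Nonempty := by
        have := hN'min n hnlt
        push_neg at this
        exact this.1
      obtain ⟨w, hw⟩ := hne
      obtain ⟨j, hji', hjk, hwj⟩ := ih (le_of_lt hnlt) w hw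
      have hystep : y (n + 1) = y n + (a - b) := by
        rw [hy n, hy (n+1)]; push_cast; ring
      rcases hz.2 with ⟨m, hm0, hmk, hzm⟩ | hzb
      · refine ⟨m, ?_, hmk, hzm⟩
        by_contra h
        push_neg at h
        exact havoid w hw.1 z hz.1 (Or.inr ⟨j - m - 1, by omega, by omega,
          by rw [hwj, hzm, hystep]; ring⟩)
      · simp only [Set.mem_singleton_iff] at hzb
        exact absurd (havoid z hz.1 w hw.1 (Or.inl ⟨k + 1 - j, by omega, by omega,
          by rw [hwj, hzb, hystep]; ring⟩)) (fun h => h)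
  obtain ⟨z, hz⟩ := hN'A
  obtain ⟨k', hk'1, hk'2, hzk'⟩ := key N' le_rfl z hz
  by_contra h
  push_neg at h
  exact havoid z hz.1 α hαA (Or.inr ⟨k' - i - 1, by omega, by omega,
    by rw [hzk']; linarith [heq]⟩)
end

section
/- Suppose each element of a finite set T is assigned a two-element subset {v_α, w_α} of a finite set X, and consider the directed graph on T with an edge (α, β) whenever α > β and {v_α, w_α} ∩ {v_β, w_β} ≠ ∅. If every vertex has indegree at most 1 and outdegree at most 1, and moreover any edge (α,β) satisfies ι(α) > ι(β) for some labeling ι : T → {0,1,…,k−1}, then T is partitioned into directed paths (chains), each of length at most k, and if consecutive vertices on a chain share exactly one label in X while non-consecutive vertices on the same chain share none, then the image of each chain C in X has size exactly |C| + 1. -/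
/-!
Out- and in-degree at most one make `E` the graph of a partial injection, and the rank `ι`,
which drops along every edge and stays below `k`, makes it well founded with all paths of at
most `k` vertices. So every vertex lies below a unique source, and the maximal paths starting at
the sources partition `T`. Along a chain each new pair of labels meets the earlier ones only in
the single label it shares with its predecessor, so it contributes exactly one new label.
-/

open Relation

section Chains

variable {α : Type*} {r : α → α → Prop}

open Classical in
noncomputable def pathFrom (r : α → α → Prop) : ℕ → α → List α
  | 0, a => [a]
  | n + 1, a => if h : ∃ b, r a b then a :: pathFrom r n h.choose else [a]

theorem pathFrom_succ_of_rel (hr : Relator.RightUnique r) {n : ℕ} {a b : α} (hab : r a b) :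
    pathFrom r (n + 1) a = a :: pathFrom r n b := by
  have h : ∃ b, r a b := ⟨b, hab⟩
  rw [pathFrom, dif_pos h, hr h.choose_spec hab]

theorem exists_pathFrom_eq_cons (n : ℕ) (a : α) : ∃ t, pathFrom r n a = a :: t := by
  cases n with
  | zero => exact ⟨[], rfl⟩
  | succ n =>
    by_cases h : ∃ b, r a b
    · exact ⟨_, dif_pos h⟩
    · exact ⟨[], dif_neg h⟩

theorem pathFrom_ne_nil (n : ℕ) (a : α) : pathFrom r n a ≠ [] := by
  obtain ⟨t, ht⟩ := exists_pathFrom_eq_cons (r := r) n a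
  simp [ht]

theorem length_pathFrom_le (n : ℕ) (a : α) : (pathFrom r n a).length ≤ n + 1 := by
  induction n generalizing a with
  | zero => simp [pathFrom]
  | succ n ih =>
    rw [pathFrom]
    split_ifs
    · simpa using ih _
    · simp

theorem isChain_pathFrom (n : ℕ) (a : α) : (pathFrom r n a).IsChain r := by
  induction n generalizing a with
  | zero => simp [pathFrom]
  | succ n ih =>
    rw [pathFrom]
    split_ifs with h
    · obtain ⟨t, ht⟩ := exists_pathFrom_eq_cons (r := r) n h.choose
      have htail := ih h.choose
      rw [ht] at htail ⊢
      exact htail.cons_cons h.choose_spec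
    · simp

theorem reflTransGen_of_mem_pathFrom {n : ℕ} {a x : α} (hx : x ∈ pathFrom r n a) :
    ReflTransGen r a x := by
  induction n generalizing a with
  | zero => simp only [pathFrom, List.mem_singleton] at hx; exact hx ▸ .refl
  | succ n ih =>
    rw [pathFrom] at hx
    split_ifs at hx with h
    · rcases List.mem_cons.mp hx with rfl | hx
      · exact .refl
      · exact .head h.choose_spec (ih hx)
    · exact List.mem_singleton.mp hx ▸ .refl

theorem mem_pathFrom_of_reflTransGen (hr : Relator.RightUnique r) {ι : α → ℕ}
    (hι : ∀ a b, r a b → ι b < ι a) {n : ℕ} {a x : α} (hax : ReflTransGen r a x)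
    (hn : ι a ≤ n) : x ∈ pathFrom r n a := by
  induction n generalizing a with
  | zero =>
    rcases hax.cases_head with rfl | ⟨b, hab, -⟩
    · simp [pathFrom]
    · exact absurd (hι a b hab) (by omega)
  | succ n ih =>
    rcases hax.cases_head with rfl | ⟨b, hab, hbx⟩
    · obtain ⟨t, ht⟩ := exists_pathFrom_eq_cons (r := r) (n + 1) a
      simp [ht]
    · rw [pathFrom_succ_of_rel hr hab]
      exact List.mem_cons_of_mem _ (ih hbx (by have := hι a b hab; omega))

theorem List.IsChain.nodup_of_rank_lt {l : List α} (hl : l.IsChain r) {ι : α → ℕ}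
    (hι : ∀ a b, r a b → ι b < ι a) : l.Nodup := by
  have hmap : (l.map ι).IsChain (· > ·) := List.isChain_map ι |>.mpr (hl.imp hι)
  exact List.Nodup.of_map ι hmap.pairwise.nodup

theorem exists_source_reflTransGen (hwf : WellFounded r) (a : α) :
    ∃ s, ReflTransGen r s a ∧ ∀ x, ¬ r x s := by
  obtain ⟨s, hsa, hmin⟩ := hwf.has_min {s | ReflTransGen r s a} ⟨a, .refl⟩
  exact ⟨s, hsa, fun x hxs => hmin x (.head hxs hsa) hxs⟩

theorem eq_of_source_of_reflTransGen (hr : Relator.RightUnique (Function.swap r)) {s s' a : α}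
    (hs : ∀ x, ¬ r x s) (hs' : ∀ x, ¬ r x s') (hsa : ReflTransGen r s a)
    (hs'a : ReflTransGen r s' a) : s = s' := by
  have source_eq {s s' : α} (hs' : ∀ x, ¬ r x s') (h : ReflTransGen r s s') : s = s' := by
    rcases h.cases_tail with rfl | ⟨c, -, hc⟩
    · rfl
    · exact absurd hc (hs' c)
  rcases (reflTransGen_swap.mpr hsa).total_of_right_unique hr (reflTransGen_swap.mpr hs'a)
    with h | h
  · exact (source_eq hs (reflTransGen_swap.mp h)).symm
  · exact source_eq hs' (reflTransGen_swap.mp h)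

theorem exists_partition_isChain (T : Finset α)
    (hrT : ∀ a b, r a b → a ∈ T ∧ b ∈ T) (hr : Relator.RightUnique r)
    (hr' : Relator.RightUnique (Function.swap r)) (k : ℕ) (ι : α → ℕ)
    (hιk : ∀ a ∈ T, ι a < k) (hι : ∀ a b, r a b → ι b < ι a) :
    ∃ P : Finset (List α),
      (∀ l ∈ P, l ≠ [] ∧ l.Nodup ∧ (∀ a ∈ l, a ∈ T) ∧ l.IsChain r ∧ l.length ≤ k) ∧
      (∀ a ∈ T, ∃! l, l ∈ P ∧ a ∈ l) := by
  classical
  have hwf : WellFounded r := Subrelation.wf (r := InvImage (· < ·) fun a => k - ι a)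
    (fun {a b} hab => by
      have := hι a b hab
      have := hιk a (hrT a b hab).1
      show k - ι a < k - ι b
      omega)
    (InvImage.wf _ wellFounded_lt)
  have mem_of_reflTransGen {s x : α} (hs : s ∈ T) (hsx : ReflTransGen r s x) : x ∈ T := by
    rcases hsx.cases_tail with rfl | ⟨c, -, hcx⟩
    exacts [hs, (hrT c x hcx).2]
  -- fuel `ι s` suffices for the path from `s` to be maximal, since `ι` drops at every step
  refine ⟨(T.filter fun s => ∀ x, ¬ r x s).image fun s => pathFrom r (ι s) s, ?_, ?_⟩
  · intro l hl
    obtain ⟨s, hs, rfl⟩ := Finset.mem_image.mp hl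
    have hsT := (Finset.mem_filter.mp hs).1
    exact ⟨pathFrom_ne_nil _ _, (isChain_pathFrom _ _).nodup_of_rank_lt hι,
      fun x hx => mem_of_reflTransGen hsT (reflTransGen_of_mem_pathFrom hx),
      isChain_pathFrom _ _, (length_pathFrom_le _ _).trans (hιk s hsT)⟩
  · intro a ha
    obtain ⟨s, hsa, hs⟩ := exists_source_reflTransGen hwf a
    have hsT : s ∈ T := by
      rcases hsa.cases_head with rfl | ⟨c, hsc, -⟩
      exacts [ha, (hrT s c hsc).1]
    refine ⟨pathFrom r (ι s) s, ⟨Finset.mem_image_of_mem _ (Finset.mem_filter.mpr ⟨hsT, hs⟩),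
      mem_pathFrom_of_reflTransGen hr hι hsa le_rfl⟩, ?_⟩
    rintro _ ⟨hl, hal⟩
    obtain ⟨s', hs', rfl⟩ := Finset.mem_image.mp hl
    rw [eq_of_source_of_reflTransGen hr' (Finset.mem_filter.mp hs').2 hs
      (reflTransGen_of_mem_pathFrom hal) hsa]

end Chains

section Labels

variable {α β : Type*} [Inhabited α] [DecidableEq α] [DecidableEq β]

theorem card_biUnion_eq_length_add_one (f : α → Finset β) (l : List α) (hl : l ≠ [])
    (hf : ∀ a ∈ l, (f a).card = 2)
    (hadj : ∀ m : ℕ, m + 1 < l.length → (f l[m]! ∩ f l[m + 1]!).card = 1)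
    (hfar : ∀ m m' : ℕ, m' < l.length → m + 1 < m' → f l[m]! ∩ f l[m']! = ∅) :
    (l.toFinset.biUnion f).card = l.length + 1 := by
  induction l with
  | nil => exact absurd rfl hl
  | cons a t ih =>
    cases t with
    | nil => simp [hf a (by simp)]
    | cons b t =>
      have hab : (f a ∩ f b).card = 1 := by simpa using hadj 0 (by simp)
      have hinter : f a ∩ (b :: t).toFinset.biUnion f = f a ∩ f b := by
        rw [Finset.inter_biUnion, List.toFinset_cons, Finset.biUnion_insert]
        convert Finset.union_empty _
        refine Finset.eq_empty_of_forall_notMem fun x hx => ?_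
        obtain ⟨c, hc, hx⟩ := Finset.mem_biUnion.mp hx
        obtain ⟨j, hj, rfl⟩ := List.mem_iff_getElem.mp (List.mem_toFinset.mp hc)
        have hdisj : f a ∩ f t[j] = ∅ := by
          have := hfar 0 (j + 2) (by simp; omega) (by omega)
          rwa [List.getElem!_cons_zero, List.getElem!_cons_succ, List.getElem!_cons_succ,
            getElem!_pos t j hj] at this
        simp [hdisj] at hx
      have htail := ih (List.cons_ne_nil b t) (fun c hc => hf c (List.mem_cons_of_mem a hc))
        (fun m hm => by simpa using hadj (m + 1) (by simpa using hm))
        (fun m m' hm' hmm' => by simpa using hfar (m + 1) (m' + 1) (by simpa using hm') (by omega))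
      have hunion := Finset.card_union_add_card_inter (f a) ((b :: t).toFinset.biUnion f)
      rw [hinter, hab, hf a (by simp), htail, ← Finset.biUnion_insert, ← List.toFinset_cons] at hunion
      simp only [List.length_cons] at hunion ⊢
      omega

end Labels

theorem stmt13_general
    (k : ℕ)
    (T : Finset ℤ) (v w : ℤ → ℤ)
    (hvw : ∀ α ∈ T, v α ≠ w α)
    (E : ℤ → ℤ → Prop)
    (hE : ∀ α β, E α β ↔ α ∈ T ∧ β ∈ T ∧ β < α ∧ (({v α, w α} ∩ {v β, w β} : Finset ℤ)).Nonempty)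
    (houtdeg : ∀ α β β', E α β → E α β' → β = β')
    (hindeg : ∀ α α' β, E α β → E α' β → α = α')
    (ι : ℤ → ℕ) (hι : ∀ α ∈ T, ι α < k)
    (hmono : ∀ α β, E α β → ι β < ι α) :
    ∃ P : Finset (List ℤ),
      (∀ l ∈ P, l ≠ [] ∧ l.Nodup ∧ (∀ α ∈ l, α ∈ T) ∧ l.Chain' E ∧ l.length ≤ k) ∧
      (∀ α ∈ T, ∃! l, l ∈ P ∧ α ∈ l) ∧
      (∀ l ∈ P,
        ((∀ m : ℕ, m + 1 < l.length →
            (({v (l[m]!), w (l[m]!)} ∩ {v (l[m+1]!), w (l[m+1]!)} : Finset ℤ)).card = 1) ∧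
         (∀ m m' : ℕ, m' < l.length → m + 1 < m' →
            (({v (l[m]!), w (l[m]!)} ∩ {v (l[m']!), w (l[m']!)} : Finset ℤ)) = ∅)) →
        (l.toFinset.biUnion (fun α => {v α, w α})).card = l.length + 1) := by
  obtain ⟨P, hchain, hpart⟩ := exists_partition_isChain T
    (fun α β h => ⟨((hE α β).mp h).1, ((hE α β).mp h).2.1⟩)
    (fun α β β' => houtdeg α β β') (fun β α α' hα hα' => hindeg α α' β hα hα') k ι hι hmono
  refine ⟨P, hchain, hpart, fun l hl ⟨hadj, hfar⟩ => ?_⟩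
  obtain ⟨hne, -, hlT, -⟩ := hchain l hl
  exact card_biUnion_eq_length_add_one (fun α => {v α, w α}) l hne
    (fun α hα => Finset.card_pair (hvw α (hlT α hα))) hadj hfar

theorem stmt13
    (k : ℕ) (hk : 1 ≤ k)
    (T X : Finset ℤ) (v w : ℤ → ℤ)
    (hvX : ∀ α ∈ T, v α ∈ X) (hwX : ∀ α ∈ T, w α ∈ X)
    (hvw : ∀ α ∈ T, v α ≠ w α)
    (E : ℤ → ℤ → Prop)
    (hE : ∀ α β, E α β ↔ α ∈ T ∧ β ∈ T ∧ β < α ∧ (({v α, w α} ∩ {v β, w β} : Finset ℤ)).Nonempty)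
    (houtdeg : ∀ α β β', E α β → E α β' → β = β')
    (hindeg : ∀ α α' β, E α β → E α' β → α = α')
    (ι : ℤ → ℕ) (hι : ∀ α ∈ T, ι α < k)
    (hmono : ∀ α β, E α β → ι β < ι α) :
    ∃ P : Finset (List ℤ),
      (∀ l ∈ P, l ≠ [] ∧ l.Nodup ∧ (∀ α ∈ l, α ∈ T) ∧ l.Chain' E ∧ l.length ≤ k) ∧
      (∀ α ∈ T, ∃! l, l ∈ P ∧ α ∈ l) ∧
      (∀ l ∈ P,
        ((∀ m : ℕ, m + 1 < l.length →
            (({v (l[m]!), w (l[m]!)} ∩ {v (l[m+1]!), w (l[m+1]!)} : Finset ℤ)).card = 1) ∧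
         (∀ m m' : ℕ, m' < l.length → m + 1 < m' →
            (({v (l[m]!), w (l[m]!)} ∩ {v (l[m']!), w (l[m']!)} : Finset ℤ)) = ∅)) →
        (l.toFinset.biUnion (fun α => {v α, w α})).card = l.length + 1) :=
  stmt13_general k T v w hvw E hE houtdeg hindeg ι hι hmono
end

section
/- Let a, b, k be positive integers with b < a < 2b, k ≥ 1, let M = { ja : 1 ≤ j ≤ k } ∪ { ja + b : 0 ≤ j ≤ k }, and let A ⊆ ℤ be M-avoiding with 0 ∈ A. Define T = A ∩ (⋃_{i=0}^{k−1} [ia+b+1, (i+1)a−1]), U = [ka+2b, (k+1)a+b−1] \ A, and I = { x ∈ [0, b−1] : A ∩ {x, x+a, …, x+ka, x+ka+b} = ∅ }. Then (k+1)|T| ≤ (k+1)|I| + k|U|. -/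
-- `σ` has no cycles in `X`, and each `σ`-chain inside `X` has at most `K` elements and leaves `X`
-- through a point of `σ '' X \ X`.
theorem succ_mul_ncard_le_mul_ncard_union_image {α : Type*} {σ : α → α} {m : α → ℕ} :
    ∀ (K : ℕ) {X : Set α}, X.Finite → Set.InjOn σ X → (∀ x ∈ X, m x < K) →
      (∀ x ∈ X, σ x ∈ X → m x < m (σ x)) → (K + 1) * X.ncard ≤ K * (X ∪ σ '' X).ncard
  | 0, X, _, _, hm, _ => by
    simp [Set.eq_empty_of_forall_notMem fun x hx => Nat.not_lt_zero _ (hm x hx)]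
  | K + 1, X, hX, hσ, hm, hmσ => by
    set X' := X ∩ σ ⁻¹' X
    have hX'X : X' ⊆ X := Set.inter_subset_left
    have ih := succ_mul_ncard_le_mul_ncard_union_image K (hX.subset hX'X) (hσ.mono hX'X)
      (fun x hx => (hmσ x hx.1 hx.2).trans_le (Nat.lt_succ_iff.mp (hm _ hx.2)))
      (fun x hx hσx => hmσ x hx.1 hσx.1)
    have h1 : (X' ∪ σ '' X').ncard ≤ X.ncard :=
      Set.ncard_le_ncard
        (Set.union_subset hX'X (Set.image_subset_iff.mpr Set.inter_subset_right)) hX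
    have h2 : (X \ X').ncard ≤ (σ '' X \ X).ncard := by
      rw [← (hσ.mono Set.sdiff_subset).ncard_image]
      refine Set.ncard_le_ncard ?_ (hX.image σ).sdiff
      rintro _ ⟨x, hx, rfl⟩
      exact ⟨⟨x, hx.1, rfl⟩, fun h => hx.2 ⟨hx.1, h⟩⟩
    have h3 : (X \ X').ncard + X'.ncard = X.ncard := Set.ncard_sdiff_add_ncard_of_subset hX'X hX
    have h4 : (σ '' X \ X).ncard + X.ncard = (X ∪ σ '' X).ncard := by
      rw [Set.union_comm]; exact Set.ncard_sdiff_add_ncard _ _ (hX.image σ) hX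
    nlinarith [Nat.mul_le_mul_left K h1, Nat.mul_le_mul_left (K + 1) h2]

theorem eq_of_add_mul_eq_add_mul {d r r' n n' : ℤ} (hr : r ∈ Set.Ico 0 d) (hr' : r' ∈ Set.Ico 0 d)
    (h : r + n * d = r' + n' * d) : r = r' :=
  calc r = (r + n * d) % d := by rw [Int.add_mul_emod_self_right, Int.emod_eq_of_lt hr.1 hr.2]
    _ = (r' + n' * d) % d := by rw [h]
    _ = r' := by rw [Int.add_mul_emod_self_right, Int.emod_eq_of_lt hr'.1 hr'.2]

theorem ncard_le_ncard_of_forall_exists_add_mul_mem {d : ℤ} {R I : Set ℤ} (hI : I.Finite)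
    (hR : R ⊆ Set.Ico 0 d) (hRI : ∀ r ∈ R, ∃ n : ℕ, r + n * d ∈ I) : R.ncard ≤ I.ncard := by
  choose! n hn using hRI
  exact Set.ncard_le_ncard_of_injOn (fun r => r + n r * d) hn
    (fun r hr r' hr' e => eq_of_add_mul_eq_add_mul (hR hr) (hR hr') e) hI

def Avoiding (a b k : ℤ) (A : Set ℤ) : Prop :=
  ∀ x ∈ A, ∀ y ∈ A,
    ¬ ((∃ j : ℤ, 1 ≤ j ∧ j ≤ k ∧ x - y = j * a) ∨ (∃ j : ℤ, 0 ≤ j ∧ j ≤ k ∧ x - y = j * a + b))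

def Blocked (a b k : ℤ) (A : Set ℤ) (x i : ℤ) : Prop :=
  0 ≤ i ∧ i ≤ k - 1 ∧ x + i * a + b ∈ A

def blockedResidues (a b k : ℤ) (A : Set ℤ) : Set ℤ :=
  {r ∈ Set.Ico 0 (a - b) | ∃ i, Blocked a b k A r i}

theorem blockedResidues_finite (a b k : ℤ) (A : Set ℤ) : (blockedResidues a b k A).Finite :=
  (Set.finite_Ico _ _).subset (Set.sep_subset _ _)

def freeStarts (a b k : ℤ) (A : Set ℤ) : Set ℤ :=
  {x ∈ Set.Icc 0 (b - 1) | A ∩ Sx a b k x = ∅}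

def reachesFree (a b k : ℤ) (A : Set ℤ) : Set ℤ :=
  {r | ∃ n : ℕ, r + n * (a - b) ∈ freeStarts a b k A}

def topGaps (a b k : ℤ) (A : Set ℤ) : Set ℤ :=
  Set.Icc (k * a + 2 * b) ((k + 1) * a + b - 1) \ A

namespace Avoiding

variable {a b k : ℤ} {A : Set ℤ}

theorem sub_ne_mul (h : Avoiding a b k A) {x y j : ℤ} (hx : x ∈ A) (hy : y ∈ A) (hj : 1 ≤ j)
    (hjk : j ≤ k) : x - y ≠ j * a :=
  fun e => h x hx y hy (Or.inl ⟨j, hj, hjk, e⟩)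

theorem sub_ne_mul_add (h : Avoiding a b k A) {x y j : ℤ} (hx : x ∈ A) (hy : y ∈ A) (hj : 0 ≤ j)
    (hjk : j ≤ k) : x - y ≠ j * a + b :=
  fun e => h x hx y hy (Or.inr ⟨j, hj, hjk, e⟩)

theorem eq_of_add_mul_mem (h : Avoiding a b k A) {x i i' : ℤ} (hi : i ∈ Set.Icc 0 k)
    (hi' : i' ∈ Set.Icc 0 k) (hx : x + i * a ∈ A) (hx' : x + i' * a ∈ A) : i = i' := by
  obtain ⟨hi0, hik⟩ := hi
  obtain ⟨hi'0, hi'k⟩ := hi'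
  rcases lt_trichotomy i i' with hlt | heq | hgt
  · exact absurd (by ring) (h.sub_ne_mul hx' hx (j := i' - i) (by omega) (by omega))
  · exact heq
  · exact absurd (by ring) (h.sub_ne_mul hx hx' (j := i - i') (by omega) (by omega))

theorem lt_of_blocked (h : Avoiding a b k A) {x i j : ℤ} (hx : Blocked a b k A x i) (hj : 0 ≤ j)
    (hxj : x + j * a ∈ A) : i < j := by
  obtain ⟨hi, hik, hxi⟩ := hx
  by_contra! hji
  exact h.sub_ne_mul_add hxi hxj (j := i - j) (by omega) (by omega) (by ring)

theorem add_mul_add_notMem (h : Avoiding a b k A) {x i : ℤ} (hx : Blocked a b k A x i) :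
    x + k * a + b ∉ A := fun hmem =>
  h.sub_ne_mul hmem hx.2.2 (j := k - i) (by linarith [hx.2.1]) (by linarith [hx.1]) (by ring)

theorem add_mul_add_two_mul_notMem (h : Avoiding a b k A) {x i : ℤ} (hx : Blocked a b k A x i) :
    x + k * a + 2 * b ∉ A := fun hmem =>
  h.sub_ne_mul_add hmem hx.2.2 (j := k - i) (by linarith [hx.2.1]) (by linarith [hx.1]) (by ring)

theorem exists_blocked_add_sub (h : Avoiding a b k A) {x i : ℤ} (hx : Blocked a b k A x i)
    (hS : (A ∩ Sx a b k x).Nonempty) :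
    ∃ j, Blocked a b k A (x + (a - b)) j ∧ ∀ i', Blocked a b k A x i' → i' ≤ j := by
  obtain ⟨w, hwA, ⟨j, hj0, hjk, rfl⟩ | rfl⟩ := hS
  · have hij := h.lt_of_blocked hx hj0 hwA
    have hi := hx.1
    refine ⟨j - 1, ⟨by omega, by omega, by convert hwA using 1; ring⟩, fun i' hi' => ?_⟩
    have := h.lt_of_blocked hi' hj0 hwA
    omega
  · exact absurd hwA (h.add_mul_add_notMem hx)

theorem free_or_blocked_of_blocked (h : Avoiding a b k A) (hba : b < a) {x i : ℤ} (hxb : x < b)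
    (hx : Blocked a b k A x i) :
    (∃ n : ℕ, x + n * (a - b) < b ∧ A ∩ Sx a b k (x + n * (a - b)) = ∅) ∨
      ∃ (n : ℕ) (j : ℤ), b ≤ x + n * (a - b) ∧ x + n * (a - b) < a ∧
        Blocked a b k A (x + n * (a - b)) j ∧ ∀ i', Blocked a b k A x i' → i' ≤ j := by
  rcases (A ∩ Sx a b k x).eq_empty_or_nonempty with hS | hS
  · exact Or.inl ⟨0, by simpa using hxb, by simpa using hS⟩
  obtain ⟨j, hj, hle⟩ := h.exists_blocked_add_sub hx hS
  by_cases hxd : b ≤ x + (a - b)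
  · exact Or.inr ⟨1, j, by simpa using hxd, by simp; linarith, by simpa using hj, hle⟩
  have hshift (n : ℕ) : x + (a - b) + n * (a - b) = x + ((n + 1 : ℕ) : ℤ) * (a - b) := by
    push_cast; ring
  rcases h.free_or_blocked_of_blocked hba (not_le.mp hxd) hj with
    ⟨n, hn⟩ | ⟨n, j', hbn, han, hj', hle'⟩
  · exact Or.inl ⟨n + 1, by rwa [← hshift]⟩
  · exact Or.inr ⟨n + 1, j', by rwa [← hshift], by rwa [← hshift], by rwa [← hshift],
      fun i' hi' => (hle i' hi').trans (hle' j hj)⟩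
termination_by (b - x).toNat
decreasing_by omega

theorem ncard_le_ncard_blockedResidues (h : Avoiding a b k A) (hb : 0 ≤ b) :
    (A ∩ ⋃ i ∈ Set.Icc 0 (k - 1), Set.Icc (i * a + b + 1) ((i + 1) * a - 1)).ncard ≤
      (blockedResidues a b k A).ncard := by
  set T := A ∩ ⋃ i ∈ Set.Icc 0 (k - 1), Set.Icc (i * a + b + 1) ((i + 1) * a - 1)
  have hres : ∀ t ∈ T, ∃ i ∈ Set.Icc 0 (k - 1),
      (t - b) % a ∈ Set.Ico 0 (a - b) ∧ (t - b) % a + i * a + b = t := by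
    rintro t ⟨-, ht⟩
    obtain ⟨i, hi, hti, hti'⟩ := Set.mem_iUnion₂.mp ht
    have hr : (t - b) % a = t - i * a - b := by
      rw [show t - b = t - i * a - b + i * a by ring, Int.add_mul_emod_self_right,
        Int.emod_eq_of_lt (by linarith) (by linarith)]
    exact ⟨i, hi, ⟨by linarith, by linarith⟩, by rw [hr]; ring⟩
  refine Set.ncard_le_ncard_of_injOn (fun t => (t - b) % a) (fun t ht => ?_)
    (fun t ht t' ht' e => ?_) (blockedResidues_finite a b k A)
  · obtain ⟨i, ⟨hi0, hik⟩, hr, hti⟩ := hres t ht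
    exact ⟨hr, i, hi0, hik, by rw [hti]; exact ht.1⟩
  · obtain ⟨i, ⟨hi0, hik⟩, -, hti⟩ := hres t ht
    obtain ⟨i', ⟨hi'0, hi'k⟩, -, hti'⟩ := hres t' ht'
    simp only at e
    rw [e] at hti
    have hii' : i = i' := h.eq_of_add_mul_mem (x := (t' - b) % a + b)
      ⟨hi0, by omega⟩ ⟨hi'0, by omega⟩ (by convert ht.1 using 1; linarith)
      (by convert ht'.1 using 1; linarith)
    subst hii'
    exact hti.symm.trans hti'

theorem add_mem_topGaps_of_mem_blockedResidues (h : Avoiding a b k A) {s : ℤ}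
    (hs : s ∈ blockedResidues a b k A) : s + k * a + 2 * b ∈ topGaps a b k A := by
  obtain ⟨⟨hs0, hsd⟩, i, hi⟩ := hs
  exact ⟨⟨by linarith, by linarith⟩, h.add_mul_add_two_mul_notMem hi⟩

theorem add_mem_topGaps_of_blocked (h : Avoiding a b k A) {z i : ℤ} (hbz : b ≤ z) (hza : z < a)
    (hz : Blocked a b k A z i) : z + k * a + b ∈ topGaps a b k A :=
  ⟨⟨by linarith, by linarith⟩, h.add_mul_add_notMem hz⟩

theorem exists_blocked_endpoint (h : Avoiding a b k A) (hba : b < a) (hab : a < 2 * b) {r : ℤ}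
    (hr : r ∈ blockedResidues a b k A \ reachesFree a b k A) :
    ∃ z L, (∃ n : ℕ, z = r + n * (a - b)) ∧ b ≤ z ∧ z < a ∧ Blocked a b k A z L ∧
      ∀ i, Blocked a b k A r i → i ≤ L := by
  obtain ⟨⟨⟨hr0, hrd⟩, i, hi⟩, hfree⟩ := hr
  rcases h.free_or_blocked_of_blocked hba (by linarith) hi with
    ⟨n, hnb, hnS⟩ | ⟨n, L, hbz, hza, hL, hle⟩
  · refine absurd ⟨n, ⟨?_, by linarith⟩, hnS⟩ hfree
    have : (0 : ℤ) ≤ n * (a - b) := mul_nonneg n.cast_nonneg (by linarith)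
    linarith
  · exact ⟨_, L, ⟨n, rfl⟩, hbz, hza, hL, hle⟩

theorem succ_mul_ncard_le_mul_ncard_topGaps (h : Avoiding a b k A) (hba : b < a)
    (hab : a < 2 * b) (hk : 0 ≤ k) :
    (k + 1) * ((blockedResidues a b k A \ reachesFree a b k A).ncard : ℤ) ≤
      k * (topGaps a b k A).ncard := by
  set RU := blockedResidues a b k A \ reachesFree a b k A
  choose! z L hzr hbz hza hL hle using fun r (hr : r ∈ RU) => h.exists_blocked_endpoint hba hab hr
  have hinj : Set.InjOn (fun r => z r - b) RU := by
    intro r hr r' hr' e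
    obtain ⟨n, hn⟩ := hzr r hr
    obtain ⟨n', hn'⟩ := hzr r' hr'
    exact eq_of_add_mul_eq_add_mul hr.1.1 hr'.1.1 (by rw [← hn, ← hn']; simpa using e)
  have hstep : ∀ r ∈ RU, z r - b ∈ RU → L r < L (z r - b) := by
    rintro r hr hσr
    obtain ⟨-, i, hi⟩ := hσr.1
    exact (h.lt_of_blocked (hL r hr) hi.1 (by convert hi.2.2 using 1; ring)).trans_le
      (hle _ hσr i hi)
  have hchains := succ_mul_ncard_le_mul_ncard_union_image k.toNat (m := fun r => (L r).toNat)
    (blockedResidues_finite a b k A).sdiff hinj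
    (fun r hr => by have := hL r hr; unfold Blocked at this; omega)
    (fun r hr hσr => by have := hstep r hr hσr; have := (hL r hr).1; omega)
  have htop : (RU ∪ (fun r => z r - b) '' RU).ncard ≤ (topGaps a b k A).ncard := by
    refine Set.ncard_le_ncard_of_injOn (· + k * a + 2 * b) ?_ (fun _ _ _ _ e => by simpa using e)
      ((Set.finite_Icc _ _).sdiff)
    rintro _ (hs | ⟨r, hr, rfl⟩)
    · exact h.add_mem_topGaps_of_mem_blockedResidues hs.1
    · convert h.add_mem_topGaps_of_blocked (hbz r hr) (hza r hr) (hL r hr) using 1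
      ring
  have hk' : ((k.toNat : ℕ) : ℤ) = k := Int.toNat_of_nonneg hk
  calc (k + 1) * (RU.ncard : ℤ) ≤ k * (RU ∪ (fun r => z r - b) '' RU).ncard := by
        rw [← hk']; exact_mod_cast hchains
    _ ≤ k * (topGaps a b k A).ncard := by gcongr

end Avoiding

theorem stmt15_general
    (a b k : ℤ) (hba : b < a) (hab : a < 2*b) (hk : 1 ≤ k)
    (A : Set ℤ)
    (havoid : ∀ x ∈ A, ∀ y ∈ A,
      ¬ ((∃ j : ℤ, 1 ≤ j ∧ j ≤ k ∧ x - y = j * a) ∨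
         (∃ j : ℤ, 0 ≤ j ∧ j ≤ k ∧ x - y = j * a + b)))
    (T U I : Set ℤ)
    (hT : T = A ∩ ⋃ i ∈ Set.Icc (0:ℤ) (k-1), Set.Icc (i*a + b + 1) ((i+1)*a - 1))
    (hU : U = Set.Icc (k*a + 2*b) ((k+1)*a + b - 1) \ A)
    (hI : I = {x ∈ Set.Icc (0:ℤ) (b-1) | A ∩ Sx a b k x = ∅}) :
    (k + 1) * (T.ncard : ℤ) ≤ (k + 1) * (I.ncard : ℤ) + k * (U.ncard : ℤ) := by
  have h : Avoiding a b k A := havoid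
  change I = freeStarts a b k A at hI
  change U = topGaps a b k A at hU
  subst hU hI
  set R := blockedResidues a b k A
  set P := reachesFree a b k A
  have hTR : T.ncard ≤ R.ncard := hT ▸ h.ncard_le_ncard_blockedResidues (by linarith)
  have hRP : (R ∩ P).ncard ≤ (freeStarts a b k A).ncard :=
    ncard_le_ncard_of_forall_exists_add_mul_mem ((Set.finite_Icc _ _).subset (Set.sep_subset _ _))
      (Set.inter_subset_left.trans (Set.sep_subset _ _)) fun _ hr => hr.2
  have hRU := h.succ_mul_ncard_le_mul_ncard_topGaps hba hab (by linarith)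
  have hsplit := Set.ncard_inter_add_ncard_sdiff_eq_ncard R P (blockedResidues_finite a b k A)
  have hk1 : (0 : ℤ) ≤ k + 1 := by linarith
  calc (k + 1) * (T.ncard : ℤ) ≤ (k + 1) * (R.ncard : ℤ) := by gcongr
    _ = (k + 1) * (R ∩ P).ncard + (k + 1) * (R \ P).ncard := by rw [← hsplit]; push_cast; ring
    _ ≤ _ := by gcongr

theorem stmt15
    (a b k : ℤ) (ha : 0 < a) (hb : 0 < b) (hba : b < a) (hab : a < 2*b) (hk : 1 ≤ k)
    (A : Set ℤ) (h0A : (0:ℤ) ∈ A)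
    (havoid : ∀ x ∈ A, ∀ y ∈ A,
      ¬ ((∃ j : ℤ, 1 ≤ j ∧ j ≤ k ∧ x - y = j * a) ∨
         (∃ j : ℤ, 0 ≤ j ∧ j ≤ k ∧ x - y = j * a + b)))
    (T U I : Set ℤ)
    (hT : T = A ∩ ⋃ i ∈ Set.Icc (0:ℤ) (k-1), Set.Icc (i*a + b + 1) ((i+1)*a - 1))
    (hU : U = Set.Icc (k*a + 2*b) ((k+1)*a + b - 1) \ A)
    (hI : I = {x ∈ Set.Icc (0:ℤ) (b-1) | A ∩ Sx a b k x = ∅}) :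
    (k + 1) * (T.ncard : ℤ) ≤ (k + 1) * (I.ncard : ℤ) + k * (U.ncard : ℤ) :=
  stmt15_general a b k hba hab hk A havoid T U I hT hU hI
end

section
/- Let α ∈ A ∩ [ia+b+1, (i+1)a−1] with 0 ≤ i < k and write α = ia + b + r with 0 ≤ r < b. If r ∉ I (i.e., A ∩ S_r ≠ ∅ where S_r = {r, r+a, …, r+ka, r+ka+b}), then r + ka + b ∉ A and r + k''a ∉ A for all 0 ≤ k'' ≤ i; consequently the element of A ∩ S_r must be of the form r + k'a with i < k' ≤ k. -/
theorem stmt17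
    (a b k : ℤ) (ha : 0 < a) (hb : 0 < b) (hba : b < a) (hab : a < 2*b) (hk : 1 ≤ k)
    (A : Set ℤ) (h0A : (0:ℤ) ∈ A)
    (havoid : ∀ x ∈ A, ∀ y ∈ A,
      ¬ ((∃ j : ℤ, 1 ≤ j ∧ j ≤ k ∧ x - y = j * a) ∨
         (∃ j : ℤ, 0 ≤ j ∧ j ≤ k ∧ x - y = j * a + b)))
    (i α r : ℤ) (hi0 : 0 ≤ i) (hik : i < k)
    (hr0 : 0 ≤ r) (hrb : r < b) (hdecomp : α = i*a + b + r)
    (hαA : α ∈ A) (hα1 : i*a + b + 1 ≤ α) (hα2 : α ≤ (i+1)*a - 1)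
    (hrI : (A ∩ Sx a b k r).Nonempty) :
    (r + k*a + b ∉ A) ∧ (∀ k'' : ℤ, 0 ≤ k'' → k'' ≤ i → r + k''*a ∉ A) ∧
      (∃ k' : ℤ, i < k' ∧ k' ≤ k ∧ r + k'*a ∈ A) := by
  have h1 : r + k*a + b ∉ A := by
    intro hmem
    exact havoid _ hmem _ hαA (Or.inl ⟨k - i, by omega, by omega, by rw [hdecomp]; ring⟩)
  have h2 : ∀ k'' : ℤ, 0 ≤ k'' → k'' ≤ i → r + k''*a ∉ A := by
    intro k'' h0 hle hmem
    exact havoid _ hαA _ hmem (Or.inr ⟨i - k'', by omega, by omega, by rw [hdecomp]; ring⟩)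
  refine ⟨h1, h2, ?_⟩
  obtain ⟨y, hyA, hyS⟩ := hrI
  rcases hyS with ⟨j, hj0, hjk, rfl⟩ | hy
  · refine ⟨j, ?_, hjk, hyA⟩
    by_contra h
    exact h2 j hj0 (by omega) hyA
  · simp only [Set.mem_singleton_iff] at hy
    subst hy
    exact absurd hyA h1
end

section
/- Let 0 ≤ i < k and suppose x, x+a−b ∈ [0, 2b−a−1] with x + k'a ∈ A for some i < k' ≤ k. If A ∩ S_{x+a−b} ≠ ∅, then (x+a−b) + ka + b ∉ A and (x+a−b) + k''a ∉ A for all 0 ≤ k'' ≤ i; hence there exists i < k''' ≤ k with (x+a−b) + k'''a ∈ A. -/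
theorem stmt18
    (a b k : ℤ) (ha : 0 < a) (hb : 0 < b) (hba : b < a) (hab : a < 2*b) (hk : 1 ≤ k)
    (A : Set ℤ) (h0A : (0:ℤ) ∈ A)
    (havoid : ∀ x ∈ A, ∀ y ∈ A,
      ¬ ((∃ j : ℤ, 1 ≤ j ∧ j ≤ k ∧ x - y = j * a) ∨
         (∃ j : ℤ, 0 ≤ j ∧ j ≤ k ∧ x - y = j * a + b)))
    (i x k' : ℤ) (hi0 : 0 ≤ i) (hik : i < k)
    (hx0 : 0 ≤ x) (hx1 : x ≤ 2*b - a - 1)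
    (hx'0 : 0 ≤ x + a - b) (hx'1 : x + a - b ≤ 2*b - a - 1)
    (hk'1 : i < k') (hk'2 : k' ≤ k) (hk'A : x + k'*a ∈ A)
    (hS : (A ∩ Sx a b k (x + a - b)).Nonempty) :
    ((x + a - b) + k*a + b ∉ A) ∧
      (∀ k'' : ℤ, 0 ≤ k'' → k'' ≤ i → (x + a - b) + k''*a ∉ A) ∧
      (∃ k''' : ℤ, i < k''' ∧ k''' ≤ k ∧ (x + a - b) + k'''*a ∈ A) := by
  have h1 : (x + a - b) + k*a + b ∉ A := by
    intro hmem
    exact havoid _ hmem _ hk'A (Or.inl ⟨k+1-k', by linarith, by linarith, by ring⟩)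
  have h2 : ∀ k'' : ℤ, 0 ≤ k'' → k'' ≤ i → (x + a - b) + k''*a ∉ A := by
    intro k'' hk''0 hk''i hmem
    exact havoid _ hk'A _ hmem (Or.inr ⟨k'-k''-1, by linarith, by linarith, by ring⟩)
  refine ⟨h1, h2, ?_⟩
  obtain ⟨y, hyA, hyS⟩ := hS
  simp only [Sx, Set.mem_union, Set.mem_setOf_eq, Set.mem_singleton_iff] at hyS
  rcases hyS with ⟨j, hj0, hjk, rfl⟩ | rfl
  · refine ⟨j, ?_, hjk, hyA⟩
    by_contra h
    exact h2 j hj0 (by linarith) hyA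
  · exact absurd hyA h1
end
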